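/- arXiv:2506.21235 — 4 statements merged into one kernel-verified Lean document; each statement's English description precedes it below -/
import Mathlib

section
/- Let G be a graph without isolated vertices with minimum degree δ(G). Then γ_{gr}^{×2}(G) ≤ |V(G)| + 1 − δ(G). -/
/-!
The last vertex of a double neighborhood sequence dominates some `u` that its predecessors
dominate at most once, so at most two vertices of the sequence lie in the closed neighborhood
`N[u]`. The remaining `|N[u]| - 2 ≥ δ(G) - 1` vertices of `N[u]` are missed by the sequence.
-/

open SimpleGraph Finset

variable {V : Type*}

/-- The closed neighborhood of a vertex. -/
def cnbr (G : SimpleGraph V) (v : V) : Set V := insert v (G.neighborSet v)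

/-- The number of vertices in the list `l` that dominate `u` (i.e. whose closed
neighborhood contains `u`). -/
noncomputable def domCount (G : SimpleGraph V) (u : V) (l : List V) : ℕ :=
  {w | w ∈ l ∧ u ∈ cnbr G w}.ncard

/-- A double neighborhood sequence (DNS): a sequence of distinct vertices in which each
vertex dominates some vertex dominated at most once by its predecessors. -/
def IsDNS (G : SimpleGraph V) (l : List V) : Prop :=
  l.Nodup ∧ ∀ i : Fin l.length, ∃ u ∈ cnbr G (l.get i), domCount G u (l.take i) ≤ 1

/-- A double dominating sequence (DDS): a DNS whose underlying set is doubly dominating. -/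
def IsDDS (G : SimpleGraph V) (l : List V) : Prop :=
  IsDNS G l ∧ ∀ v, 2 ≤ domCount G v l

/-- The Grundy double domination number: maximum length of a DDS. -/
noncomputable def gddn (G : SimpleGraph V) : ℕ :=
  sSup {n | ∃ l : List V, IsDDS G l ∧ l.length = n}

/-- The maximum double neighborhood number: maximum length of a DNS. -/
noncomputable def mdnn (G : SimpleGraph V) : ℕ :=
  sSup {n | ∃ l : List V, IsDNS G l ∧ l.length = n}

/-- A legal (Grundy domination) sequence. -/
def IsLegal (G : SimpleGraph V) (l : List V) : Prop :=
  l.Nodup ∧ ∀ i : Fin l.length, ∃ u ∈ cnbr G (l.get i), domCount G u (l.take i) = 0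

/-- A dominating sequence: legal sequence whose underlying set dominates. -/
def IsDomSeq (G : SimpleGraph V) (l : List V) : Prop :=
  IsLegal G l ∧ ∀ v, 1 ≤ domCount G v l

/-- The Grundy domination number: maximum length of a dominating sequence. -/
noncomputable def grundy (G : SimpleGraph V) : ℕ :=
  sSup {n | ∃ l : List V, IsDomSeq G l ∧ l.length = n}

/-- The double domination number: minimum size of a double dominating set. -/
noncomputable def ddomNum (G : SimpleGraph V) : ℕ :=
  sInf {n | ∃ D : Set V, (∀ v, 2 ≤ {w | w ∈ D ∧ v ∈ cnbr G w}.ncard) ∧ D.ncard = n}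

section Counting

variable (G : SimpleGraph V)

theorem domCount_append_singleton_le (u : V) (l : List V) (x : V) :
    domCount G u (l ++ [x]) ≤ domCount G u l + 1 := by
  have hfin : {w | w ∈ l ∧ u ∈ cnbr G w}.Finite := l.finite_toSet.subset fun _ hw => hw.1
  refine (Set.ncard_le_ncard ?_ (hfin.insert x)).trans (Set.ncard_insert_le _ _)
  rintro w ⟨hw, hu⟩
  rcases List.mem_append.1 hw with hw | hw
  · exact Or.inr ⟨hw, hu⟩
  · exact Or.inl (List.mem_singleton.1 hw)

theorem IsDNS.exists_domCount_le_two {l : List V} (hl : IsDNS G l) (hne : l ≠ []) :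
    ∃ u, domCount G u l ≤ 2 := by
  obtain ⟨u, -, hu⟩ := hl.2 ⟨l.length - 1, by simpa [Nat.pos_iff_ne_zero] using hne⟩
  rw [← List.dropLast_eq_take] at hu
  refine ⟨u, ?_⟩
  rw [← List.dropLast_append_getLast hne]
  exact (domCount_append_singleton_le G u _ _).trans (by omega)

theorem domCount_eq_card_inter [DecidableEq V] (u : V) [Fintype (G.neighborSet u)]
    (l : List V) : domCount G u l = #(l.toFinset ∩ insert u (G.neighborFinset u)) := by
  rw [domCount, ← Set.ncard_coe_finset]
  congr 1
  ext w
  simp [cnbr, eq_comm, G.adj_comm]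

variable [Fintype V] [DecidableEq V] [DecidableRel G.Adj]

theorem length_add_degree_le {l : List V} (hl : l.Nodup) (u : V) :
    l.length + (G.degree u + 1) ≤ Fintype.card V + domCount G u l := by
  rw [domCount_eq_card_inter, ← List.toFinset_card_of_nodup hl,
    ← card_neighborFinset_eq_degree, ← card_insert_of_notMem (by simp : u ∉ G.neighborFinset u),
    ← card_union_add_card_inter]
  exact Nat.add_le_add_right (card_le_univ _) _

theorem IsDNS.length_le {l : List V} (hl : IsDNS G l) :
    l.length ≤ Fintype.card V + 1 - G.minDegree := by
  rcases eq_or_ne l [] with rfl | hne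
  · exact Nat.zero_le _
  obtain ⟨u, hu⟩ := hl.exists_domCount_le_two G hne
  have hcount := length_add_degree_le G hl.1 u
  have hmin := G.minDegree_le_degree u
  omega

end Counting

theorem stmt1_general [Fintype V] [DecidableEq V] (G : SimpleGraph V) [DecidableRel G.Adj] :
    gddn G ≤ Fintype.card V + 1 - G.minDegree :=
  csSup_le' fun _ ⟨_, hl, hlen⟩ => hlen ▸ hl.1.length_le G

/-- γ_{gr}^{×2}(G) ≤ |V(G)| + 1 − δ(G). -/
theorem stmt1 [Fintype V] [DecidableEq V] (G : SimpleGraph V) [DecidableRel G.Adj]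
    (hiso : ∀ v : V, ∃ u, G.Adj v u) :
    gddn G ≤ Fintype.card V + 1 - G.minDegree :=
  stmt1_general G
end

section
/- Let G be a graph without isolated vertices. Then γ_{gr}^{×2}(G) ≤ 2·γ_{gr}(G). -/
open SimpleGraph

variable {V : Type*}

/-!
Call a vertex of a double neighborhood sequence *free* if its closed neighborhood contains a
vertex not yet dominated, and *bound* otherwise. The free vertices form a legal sequence. So do
the bound ones: a bound vertex `v` dominates some `u` dominated exactly once before it, and if an
earlier bound vertex `w` dominated `u`, then `u` would already have been dominated before `w`
as well, hence twice before `v`. A longest legal sequence is dominating, so each of the two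
parts has length at most `γ_gr(G)`.
-/

theorem List.forall_fin_append_singleton_iff {α : Type*} (l : List α) (v : α)
    (P : α → List α → Prop) :
    (∀ i : Fin (l ++ [v]).length, P ((l ++ [v]).get i) ((l ++ [v]).take i)) ↔
      (∀ i : Fin l.length, P (l.get i) (l.take i)) ∧ P v l := by
  constructor
  · intro h
    refine ⟨fun i => ?_, ?_⟩
    · have := h ⟨i, by simp⟩
      simpa [List.getElem_append_left i.2, List.take_append_of_le_length i.2.le] using this
    · simpa using h ⟨l.length, by simp⟩
  · rintro ⟨h, hv⟩ ⟨i, hi⟩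
    rcases Nat.lt_or_ge i l.length with hlt | hge
    · simpa [List.getElem_append_left hlt, List.take_append_of_le_length hlt.le] using h ⟨i, hlt⟩
    · obtain rfl : i = l.length := by simp at hi; omega
      simpa using hv

theorem List.exists_forall_length_le_of_nodup {α : Type*} [Fintype α] {P : List α → Prop}
    (hP : ∀ l, P l → l.Nodup) {m : List α} (hm : P m) :
    ∃ l, P l ∧ ∀ l', P l' → l'.length ≤ l.length := by
  have hbdd : BddAbove {n | ∃ l, P l ∧ l.length = n} :=
    ⟨Fintype.card α, by rintro _ ⟨l, hl, rfl⟩; exact (hP l hl).length_le_card⟩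
  have hne : {n | ∃ l, P l ∧ l.length = n}.Nonempty := ⟨_, m, hm, rfl⟩
  obtain ⟨l, hl, hlS⟩ := Nat.sSup_mem hne hbdd
  exact ⟨l, hl, fun l' hl' => hlS ▸ le_csSup hbdd ⟨l', hl', rfl⟩⟩

section

variable {G : SimpleGraph V}

theorem mem_cnbr_self (G : SimpleGraph V) (v : V) : v ∈ cnbr G v := Set.mem_insert _ _

theorem finite_setOf_dominators (G : SimpleGraph V) (u : V) (l : List V) :
    {w | w ∈ l ∧ u ∈ cnbr G w}.Finite :=
  l.finite_toSet.subset fun _ hw => hw.1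

theorem domCount_mono {m m' : List V} (h : m ⊆ m') (u : V) :
    domCount G u m ≤ domCount G u m' :=
  Set.ncard_le_ncard (fun _ hw => ⟨h hw.1, hw.2⟩) (finite_setOf_dominators G u m')

theorem domCount_eq_zero_iff {u : V} {m : List V} :
    domCount G u m = 0 ↔ ∀ w ∈ m, u ∉ cnbr G w := by
  simp [domCount, Set.ncard_eq_zero (finite_setOf_dominators G u m),
    Set.eq_empty_iff_forall_notMem]

theorem notMem_of_domCount_self_eq_zero {v : V} {m : List V} (h : domCount G v m = 0) :
    v ∉ m :=
  fun hv => domCount_eq_zero_iff.1 h v hv (mem_cnbr_self G v)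

theorem domCount_append_singleton {u v : V} {l : List V} (hv : v ∉ l) (hu : u ∈ cnbr G v) :
    domCount G u (l ++ [v]) = domCount G u l + 1 := by
  have : {w | w ∈ l ++ [v] ∧ u ∈ cnbr G w} = insert v {w | w ∈ l ∧ u ∈ cnbr G w} := by
    ext w
    by_cases hw : w = v
    · subst hw; simp [hu]
    · simp [hw]
  rw [domCount, this, Set.ncard_insert_of_notMem (fun h => hv h.1)
    (finite_setOf_dominators G u l), domCount]

theorem isLegal_append_singleton_iff {l : List V} {v : V} :
    IsLegal G (l ++ [v]) ↔ IsLegal G l ∧ v ∉ l ∧ ∃ u ∈ cnbr G v, domCount G u l = 0 := by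
  rw [IsLegal, IsLegal, List.forall_fin_append_singleton_iff l v
    (fun x m => ∃ u ∈ cnbr G x, domCount G u m = 0)]
  simp only [List.nodup_append, List.nodup_singleton, List.mem_singleton]
  grind

theorem isDNS_append_singleton_iff {l : List V} {v : V} :
    IsDNS G (l ++ [v]) ↔ IsDNS G l ∧ v ∉ l ∧ ∃ u ∈ cnbr G v, domCount G u l ≤ 1 := by
  rw [IsDNS, IsDNS, List.forall_fin_append_singleton_iff l v
    (fun x m => ∃ u ∈ cnbr G x, domCount G u m ≤ 1)]
  simp only [List.nodup_append, List.nodup_singleton, List.mem_singleton]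
  grind

theorem isLegal_nil : IsLegal G [] :=
  ⟨List.nodup_nil, fun i => i.elim0⟩

-- The last conjunct is the induction invariant that keeps the second part legal.
-- The last conjunct is the induction invariant that keeps the second part legal.
theorem IsDNS.exists_isLegal_split {l : List V} (hl : IsDNS G l) :
    ∃ m₁ m₂ : List V, IsLegal G m₁ ∧ IsLegal G m₂ ∧ (m₁ ++ m₂).Perm l ∧
      ∀ w ∈ m₂, ∀ u ∈ cnbr G w, 2 ≤ domCount G u l := by
  induction l using List.reverseRecOn with
  | nil => exact ⟨[], [], isLegal_nil, isLegal_nil, .nil, by simp⟩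
  | append_singleton l v ih =>
    obtain ⟨hl, hvl, u, hu, hu1⟩ := isDNS_append_singleton_iff.1 hl
    obtain ⟨m₁, m₂, h₁, h₂, hperm, hdom₂⟩ := ih hl
    have hdom₂' : ∀ w ∈ m₂, ∀ u ∈ cnbr G w, 2 ≤ domCount G u (l ++ [v]) := fun w hw u hu =>
      (hdom₂ w hw u hu).trans (domCount_mono (List.subset_append_left _ _) u)
    by_cases hfree : ∃ u ∈ cnbr G v, domCount G u l = 0
    · obtain ⟨u, hu, hu0⟩ := hfree
      refine ⟨m₁ ++ [v], m₂, isLegal_append_singleton_iff.2 ⟨h₁, ?_, u, hu, ?_⟩, h₂, ?_, hdom₂'⟩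
      · exact fun hv => hvl (hperm.subset (List.mem_append_left _ hv))
      · have := domCount_mono (G := G) (fun _ hw => hperm.subset (List.mem_append_left m₂ hw)) u
        omega
      · rw [List.append_assoc]
        exact (List.perm_append_comm.append_left m₁).trans
          (by simpa using hperm.append_right [v])
    · push Not at hfree
      have hm₂u : domCount G u m₂ = 0 := domCount_eq_zero_iff.2 fun w hw huw => by
        have := hdom₂ w hw u huw
        omega
      refine ⟨m₁, m₂ ++ [v], h₁, isLegal_append_singleton_iff.2 ⟨h₂, ?_, u, hu, hm₂u⟩, ?_, ?_⟩
      · exact fun hv => hvl (hperm.subset (List.mem_append_right _ hv))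
      · simpa using hperm.append_right [v]
      · intro w hw u' hu'
        rcases List.mem_append.1 hw with hw | hw
        · exact hdom₂' w hw u' hu'
        · obtain rfl := List.mem_singleton.1 hw
          rw [domCount_append_singleton hvl hu']
          have := hfree u' hu'
          omega

/-- A longest legal sequence is dominating: an undominated vertex could be appended to it. -/
theorem IsLegal.length_le_grundy [Fintype V] {m : List V} (hm : IsLegal G m) :
    m.length ≤ grundy G := by
  obtain ⟨l, hl, hlongest⟩ := List.exists_forall_length_le_of_nodup (fun _ h => h.1) hm
  have hdom : ∀ v, 1 ≤ domCount G v l := fun v => by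
    by_contra! hv
    have hv0 : domCount G v l = 0 := by omega
    have := hlongest (l ++ [v]) <| isLegal_append_singleton_iff.2
      ⟨hl, notMem_of_domCount_self_eq_zero hv0, v, mem_cnbr_self G v, hv0⟩
    simp at this
  have hbdd : BddAbove {n | ∃ l : List V, IsDomSeq G l ∧ l.length = n} :=
    ⟨Fintype.card V, by rintro _ ⟨l, hl, rfl⟩; exact hl.1.1.length_le_card⟩
  calc m.length ≤ l.length := hlongest m hm
    _ ≤ grundy G := le_csSup hbdd ⟨l, ⟨hl, hdom⟩, rfl⟩

end

theorem stmt3_general [Fintype V] (G : SimpleGraph V) :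
    gddn G ≤ 2 * grundy G := by
  refine csSup_le' ?_
  rintro _ ⟨l, ⟨hl, -⟩, rfl⟩
  obtain ⟨m₁, m₂, h₁, h₂, hperm, -⟩ := hl.exists_isLegal_split
  have hlen : m₁.length + m₂.length = l.length := by simpa using hperm.length_eq
  have := h₁.length_le_grundy
  have := h₂.length_le_grundy
  omega

/-- γ_{gr}^{×2}(G) ≤ 2·γ_{gr}(G). -/
theorem stmt3 [Fintype V] (G : SimpleGraph V)
    (hiso : ∀ v : V, ∃ u, G.Adj v u) :
    gddn G ≤ 2 * grundy G :=
  stmt3_general G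
end

section
/- If T is a tree, then the maximum double neighborhood number of T equals |V(T)|; that is, there is an ordering of all vertices of T forming a double neighborhood sequence. -/
open SimpleGraph

variable {V : Type*}

/-! Order the vertices of the tree by their distance from a root `r`. A vertex `v` dominates
itself, and of its predecessors only its neighbours dominate it. Adjacent vertices of a tree lie
at different distances from `r`, and the only neighbour of `v` closer to `r` is the penultimate
vertex of the path from `r` to `v`, so `v` is dominated at most once before it appears. -/

lemma List.getElem_not_mem_take {α : Type*} {l : List α} (hl : l.Nodup) (i : ℕ)
    (hi : i < l.length) : l[i] ∉ l.take i := fun hmem ↦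
  hl.rel_of_mem_take_of_mem_drop hmem (List.drop_eq_getElem_cons hi ▸ List.mem_cons_self) rfl

lemma List.Pairwise.rel_getElem_of_mem_take {α : Type*} {R : α → α → Prop} {l : List α}
    (hl : l.Pairwise R) {i : ℕ} (hi : i < l.length) {w : α} (hw : w ∈ l.take i) : R w l[i] :=
  hl.rel_of_mem_take_of_mem_drop hw (List.drop_eq_getElem_cons hi ▸ List.mem_cons_self)

lemma Fintype.exists_nodup_pairwise_le_forall_mem {α β : Type*} [Fintype α] [LinearOrder β]
    (f : α → β) : ∃ l : List α, l.Nodup ∧ l.Pairwise (fun a b ↦ f a ≤ f b) ∧ ∀ a, a ∈ l := by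
  let l := Finset.univ.toList.mergeSort (fun a b ↦ decide (f a ≤ f b))
  have hperm : l.Perm Finset.univ.toList := List.mergeSort_perm _ _
  refine ⟨l, hperm.nodup_iff.mpr (Finset.nodup_toList _), ?_, fun a ↦ by simp [hperm.mem_iff]⟩
  simpa using List.pairwise_mergeSort (le := fun a b ↦ decide (f a ≤ f b))
    (fun _ _ _ hab hbc ↦ by simpa using le_trans (by simpa using hab) (by simpa using hbc))
    (fun a b ↦ by simpa using le_total (f a) (f b)) Finset.univ.toList

namespace SimpleGraph

variable {G : SimpleGraph V}

lemma IsAcyclic.eq_penultimate_of_adj_of_dist_lt (hG : G.IsAcyclic) {r v w : V}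
    {q : G.Walk r v} (hq : q.IsPath) (hadj : G.Adj w v) (hlt : G.dist r w < G.dist r v) :
    w = q.penultimate := by
  classical
  obtain ⟨p, hp, hplen⟩ := (q.reachable.trans hadj.symm.reachable).exists_path_of_dist
  have hv : v ∉ p.support := fun hv ↦ by
    have := G.dist_le (p.takeUntil v hv)
    have := p.length_takeUntil_le_length hv
    omega
  exact hG.eq_penultimate_of_adj_end hq hadj.symm
    (hG.mem_support_of_ne_mem_support_of_adj_of_isPath hq hp hadj.symm hv)

lemma IsAcyclic.subsingleton_adj_dist_lt (hG : G.IsAcyclic) (r v : V) :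
    {w | G.Adj w v ∧ G.dist r w < G.dist r v}.Subsingleton := by
  rintro w₁ ⟨hadj₁, hlt₁⟩ w₂ ⟨hadj₂, hlt₂⟩
  obtain ⟨q, hq, -⟩ := (Reachable.of_dist_ne_zero (by omega : G.dist r v ≠ 0)).exists_path_of_dist
  rw [hG.eq_penultimate_of_adj_of_dist_lt hq hadj₁ hlt₁,
    hG.eq_penultimate_of_adj_of_dist_lt hq hadj₂ hlt₂]

lemma isDNS_of_subsingleton_adj_take {l : List V} (hl : l.Nodup)
    (h : ∀ i : Fin l.length, {w | w ∈ l.take i ∧ G.Adj w (l.get i)}.Subsingleton) :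
    IsDNS G l := by
  refine ⟨hl, fun i ↦ ⟨l.get i, Set.mem_insert _ _, ?_⟩⟩
  have hsub : {w | w ∈ l.take i ∧ l.get i ∈ cnbr G w} ⊆ {w | w ∈ l.take i ∧ G.Adj w (l.get i)} := by
    rintro w ⟨hw, rfl | hadj⟩
    · exact absurd hw (List.getElem_not_mem_take hl i i.isLt)
    · exact ⟨hw, hadj⟩
  have hsing := (h i).anti hsub
  have := hsing.finite.to_subtype
  exact Set.ncard_le_one_iff_subsingleton.mpr hsing

lemma IsTree.isDNS_of_pairwise_dist_le (hG : G.IsTree) (r : V)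
    {l : List V} (hl : l.Nodup) (hsort : l.Pairwise (fun a b ↦ G.dist r a ≤ G.dist r b)) :
    IsDNS G l := by
  refine isDNS_of_subsingleton_adj_take hl fun i ↦ ?_
  refine (hG.isAcyclic.subsingleton_adj_dist_lt r (l.get i)).anti ?_
  rintro w ⟨hw, hadj⟩
  exact ⟨hadj, (hsort.rel_getElem_of_mem_take i.isLt hw).lt_of_ne (hG.dist_ne_of_adj r hadj)⟩

lemma mdnn_eq_card_of_isDNS [Fintype V] {l : List V} (hdns : IsDNS G l)
    (hmem : ∀ v, v ∈ l) : mdnn G = Fintype.card V := by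
  classical
  have hlen : l.length = Fintype.card V := by
    rw [← Finset.card_univ, ← List.toFinset_card_of_nodup hdns.1]
    congr
    ext v
    simp [hmem]
  refine IsGreatest.csSup_eq ⟨⟨l, hdns, hlen⟩, ?_⟩
  rintro n ⟨l', hl', rfl⟩
  exact hl'.1.length_le_card

end SimpleGraph

/-- for a tree, the maximum double neighborhood number equals the number of
vertices: some ordering of all the vertices is a double neighborhood sequence. -/
theorem stmt9 [Fintype V] (G : SimpleGraph V) (h : G.IsTree) :
    mdnn G = Fintype.card V ∧ ∃ l : List V, IsDNS G l ∧ ∀ v : V, v ∈ l := by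
  obtain ⟨r⟩ := h.connected.nonempty
  obtain ⟨l, hnodup, hsort, hmem⟩ := Fintype.exists_nodup_pairwise_le_forall_mem (G.dist r)
  have hdns : IsDNS G l := h.isDNS_of_pairwise_dist_le r hnodup hsort
  exact ⟨mdnn_eq_card_of_isDNS hdns hmem, l, hdns, hmem⟩
end

section
/- Let v and v' be false twin vertices of a graph G (N(v) = N(v'), v ≠ v'). Then ρ(G − v') ≤ ρ(G) ≤ ρ(G − v') + 1, where ρ denotes the maximum double neighborhood number. -/
open SimpleGraph

variable {V : Type*}

/-!
Every DNS of `G - v'` is a DNS of `G`. Conversely, swapping the twins is an automorphism of `G`,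
so a maximum DNS of `G` may be taken with `v'` before `v`. Deleting `v'` from it leaves a DNS of
`G - v'`: a vertex whose witness was `v'` is adjacent to `v'`, hence to `v`, and `v` becomes its
witness. Before `v'` occurs neither twin has been played, so `v` and `v'` are dominated equally
often; after it, `v'` was dominated by itself, so no earlier vertex is adjacent to `v'` (or `v`),
and `v` is dominated at most by itself.
-/

lemma List.forall_mem_take_or_forall_mem_take_map_swap {α : Type*} [DecidableEq α]
    (l : List α) (a b : α) :
    (∀ n, a ∈ l.take n → b ∈ l.take n) ∨
      ∀ n, a ∈ (l.map (Equiv.swap a b)).take n → b ∈ (l.map (Equiv.swap a b)).take n := by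
  refine or_iff_not_imp_left.2 fun h n han => ?_
  push Not at h
  obtain ⟨k, hak, hbk⟩ := h
  rw [← List.map_take] at han ⊢
  have hbn : b ∈ l.take n :=
    (List.mem_map_of_injective (Equiv.injective _)).1 (by rwa [Equiv.swap_apply_right])
  have hkn : k ≤ n := by
    by_contra hnk
    exact hbk ((List.take_sublist_take_left (by omega)).subset hbn)
  exact List.mem_map.2
    ⟨a, (List.take_sublist_take_left hkn).subset hak, Equiv.swap_apply_left a b⟩

lemma List.Sublist.exists_eq_append_cons {α : Type*} {l A' B' : List α} {x : α}
    (h : (A' ++ x :: B').Sublist l) : ∃ A B, l = A ++ x :: B ∧ A'.Sublist A := by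
  obtain ⟨r₁, r₂, rfl, h₁, h₂⟩ := List.append_sublist_iff.1 h
  obtain ⟨C, D, rfl⟩ := List.append_of_mem (h₂.subset List.mem_cons_self)
  exact ⟨r₁ ++ C, D, by simp, h₁.trans (List.sublist_append_left _ _)⟩

namespace SimpleGraph

variable {W : Type*} {G : SimpleGraph V} {H : SimpleGraph W}

lemma mem_cnbr {u w : V} : u ∈ cnbr G w ↔ u = w ∨ G.Adj w u := Set.mem_insert_iff

lemma Embedding.mem_cnbr_map_iff (f : H ↪g G) {u w : W} :
    f u ∈ cnbr G (f w) ↔ u ∈ cnbr H w := by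
  simp only [mem_cnbr, f.map_adj_iff, f.injective.eq_iff]

lemma Embedding.domCount_map (f : H ↪g G) (u : W) (l : List W) :
    domCount G (f u) (l.map f) = domCount H u l := by
  have himage :
      {w | w ∈ l.map f ∧ f u ∈ cnbr G w} = f '' {w | w ∈ l ∧ u ∈ cnbr H w} := by
    ext w
    simp only [List.mem_map, Set.mem_image, Set.mem_ofPred_eq]
    constructor
    · rintro ⟨⟨x, hx, rfl⟩, hu⟩
      exact ⟨x, ⟨hx, f.mem_cnbr_map_iff.1 hu⟩, rfl⟩
    · rintro ⟨x, ⟨hx, hu⟩, rfl⟩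
      exact ⟨⟨x, hx, rfl⟩, f.mem_cnbr_map_iff.2 hu⟩
  rw [domCount, himage, Set.ncard_image_of_injective _ f.injective]
  rfl

lemma domCount_mono (u : V) {A A' : List V} (h : A' ⊆ A) :
    domCount G u A' ≤ domCount G u A :=
  Set.ncard_le_ncard (fun _ hx => ⟨h hx.1, hx.2⟩)
    ((List.finite_toSet A).subset fun _ hx => hx.1)

lemma isDNS_iff_forall_eq_append_cons {l : List V} :
    IsDNS G l ↔ l.Nodup ∧
      ∀ A x B, l = A ++ x :: B → ∃ u ∈ cnbr G x, domCount G u A ≤ 1 := by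
  refine and_congr_right fun _ => ⟨fun h A _ B hl => ?_, fun h i => ?_⟩
  · subst hl
    obtain ⟨u, hu, hdom⟩ := h ⟨A.length, by simp⟩
    refine ⟨u, by simpa using hu, ?_⟩
    rwa [List.take_left] at hdom
  · have hsplit := List.take_append_drop (i : ℕ) l
    rw [List.drop_eq_getElem_cons i.isLt] at hsplit
    simpa using h _ _ _ hsplit.symm

lemma IsDNS.map {l : List W} (hl : IsDNS H l) (f : H ↪g G) : IsDNS G (l.map f) := by
  rw [isDNS_iff_forall_eq_append_cons] at hl ⊢
  refine ⟨hl.1.map f.injective, fun A x B hsplit => ?_⟩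
  obtain ⟨A₀, R, rfl, rfl, hR⟩ := List.map_eq_append_iff.1 hsplit
  obtain ⟨x₀, B₀, rfl, rfl, -⟩ := List.map_eq_cons_iff.1 hR
  obtain ⟨u, hu, hdom⟩ := hl.2 A₀ x₀ B₀ rfl
  exact ⟨f u, f.mem_cnbr_map_iff.2 hu, (f.domCount_map u A₀).symm ▸ hdom⟩

variable {v v' : V}

lemma adj_iff_of_neighborSet_eq (htwin : G.neighborSet v = G.neighborSet v') (x : V) :
    G.Adj x v ↔ G.Adj x v' := by
  simpa only [mem_neighborSet, G.adj_comm _ x] using Set.ext_iff.1 htwin x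

def Iso.swapOfNeighborSetEq [DecidableEq V] (htwin : G.neighborSet v = G.neighborSet v') :
    G ≃g G where
  toEquiv := Equiv.swap v v'
  map_rel_iff' {a b} := by
    have hx := adj_iff_of_neighborSet_eq htwin
    have hnot : ¬ G.Adj v v' := fun h => G.irrefl ((hx v).2 h)
    simp only [Equiv.swap_apply_def]
    split_ifs <;> simp_all [G.adj_comm]

lemma domCount_le_one_of_neighborSet_eq (htwin : G.neighborSet v = G.neighborSet v')
    {A A' : List V} (hsub : A' ⊆ A) (hv' : v' ∉ A') (hv : v ∈ A' → v' ∈ A)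
    (h : domCount G v' A ≤ 1) : domCount G v A' ≤ 1 := by
  have hfin : {w | w ∈ A ∧ v' ∈ cnbr G w}.Finite :=
    (List.finite_toSet A).subset fun _ hw => hw.1
  by_cases hvA' : v ∈ A'
  · have honly : {w | w ∈ A' ∧ v ∈ cnbr G w} ⊆ {v} := by
      rintro w ⟨hw, hwv⟩
      rcases mem_cnbr.1 hwv with rfl | hadj
      · rfl
      · have hwv' := (Set.ncard_le_one hfin).1 h
          w ⟨hsub hw, mem_cnbr.2 (Or.inr ((adj_iff_of_neighborSet_eq htwin w).1 hadj))⟩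
          v' ⟨hv hvA', mem_cnbr.2 (Or.inl rfl)⟩
        exact absurd (hwv' ▸ hw) hv'
    exact (Set.ncard_le_ncard honly (Set.finite_singleton v)).trans (Set.ncard_singleton v).le
  · refine le_trans (Set.ncard_le_ncard ?_ hfin) h
    rintro w ⟨hw, hwv⟩
    rcases mem_cnbr.1 hwv with rfl | hadj
    · exact absurd hw hvA'
    · exact ⟨hsub hw, mem_cnbr.2 (Or.inr ((adj_iff_of_neighborSet_eq htwin w).1 hadj))⟩

lemma IsDNS.exists_witness_of_eq_erase [DecidableEq V] {l A' B' : List V} {x : V}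
    (hne : v ≠ v') (htwin : G.neighborSet v = G.neighborSet v') (hl : IsDNS G l)
    (hprec : ∀ n, v ∈ l.take n → v' ∈ l.take n) (h : l.erase v' = A' ++ x :: B') :
    ∃ u ≠ v', u ∈ cnbr G x ∧ domCount G u A' ≤ 1 := by
  rw [isDNS_iff_forall_eq_append_cons] at hl
  have hv' : v' ∉ A' ++ x :: B' := h ▸ hl.1.not_mem_erase
  have hsub : (A' ++ x :: B').Sublist l := h ▸ List.erase_sublist
  obtain ⟨A, B, rfl, hA'A⟩ := hsub.exists_eq_append_cons
  obtain ⟨u, hu, hdom⟩ := hl.2 A x B rfl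
  by_cases huv' : u = v'
  · subst huv'
    have hxu : x ≠ u := fun hx => hv' (by simp [hx])
    refine ⟨v, hne, ?_, domCount_le_one_of_neighborSet_eq htwin hA'A.subset
      (fun h => hv' (List.mem_append_left _ h)) (fun hv => ?_) hdom⟩
    · rcases mem_cnbr.1 hu with rfl | hadj
      · exact absurd rfl hxu
      · exact mem_cnbr.2 (Or.inr ((adj_iff_of_neighborSet_eq htwin x).2 hadj))
    · simpa using hprec A.length (by simpa using hA'A.subset hv)
  · exact ⟨u, huv', hu, (domCount_mono u hA'A.subset).trans hdom⟩

lemma exists_isDNS_induce_length_eq {s : Set V} {m : List V} (hnd : m.Nodup)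
    (hs : ∀ x ∈ m, x ∈ s)
    (hw : ∀ A x B, m = A ++ x :: B → ∃ u ∈ s, u ∈ cnbr G x ∧ domCount G u A ≤ 1) :
    ∃ l : List s, IsDNS (G.induce s) l ∧ l.length = m.length := by
  lift m to List s using hs
  refine ⟨m, isDNS_iff_forall_eq_append_cons.2 ⟨hnd.of_map _, fun A x B hsplit => ?_⟩,
    by simp⟩
  obtain ⟨u, hus, hu, hdom⟩ := hw (A.map (↑)) x (B.map (↑)) (by simp [hsplit])
  let f : G.induce s ↪g G := Embedding.induce s
  refine ⟨⟨u, hus⟩, f.mem_cnbr_map_iff.1 hu, ?_⟩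
  rw [← f.domCount_map]
  exact hdom

lemma bddAbove_isDNS_length [Finite V] (G : SimpleGraph V) :
    BddAbove {n | ∃ l : List V, IsDNS G l ∧ l.length = n} := by
  have := Fintype.ofFinite V
  exact ⟨Fintype.card V, fun _ ⟨l, hl, hn⟩ => hn ▸ hl.1.length_le_card⟩

lemma IsDNS.length_le_mdnn [Finite V] {l : List V} (hl : IsDNS G l) : l.length ≤ mdnn G :=
  le_csSup (bddAbove_isDNS_length G) ⟨l, hl, rfl⟩

lemma exists_isDNS_length_eq_mdnn [Finite V] (G : SimpleGraph V) :
    ∃ l : List V, IsDNS G l ∧ l.length = mdnn G := by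
  have hnil : IsDNS G [] := ⟨List.nodup_nil, fun i => i.elim0⟩
  exact Nat.sSup_mem (s := {n | ∃ l : List V, IsDNS G l ∧ l.length = n}) ⟨0, [], hnil, rfl⟩
    (bddAbove_isDNS_length G)

end SimpleGraph

/-- removing one of a pair of false twins decreases ρ by at most 1. -/
theorem stmt16 [Fintype V] (G : SimpleGraph V) (v v' : V) (hne : v ≠ v')
    (htwin : G.neighborSet v = G.neighborSet v') :
    mdnn (G.induce {u : V | u ≠ v'}) ≤ mdnn G ∧
    mdnn G ≤ mdnn (G.induce {u : V | u ≠ v'}) + 1 := by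
  classical
  constructor
  · obtain ⟨l, hl, hlen⟩ := exists_isDNS_length_eq_mdnn (G.induce {u : V | u ≠ v'})
    simpa [hlen] using (hl.map (Embedding.induce _)).length_le_mdnn
  · obtain ⟨l, hl, hlen⟩ := exists_isDNS_length_eq_mdnn G
    obtain ⟨l₁, hl₁, hlen₁, hprec⟩ : ∃ l₁, IsDNS G l₁ ∧ l₁.length = l.length ∧
        ∀ n, v ∈ l₁.take n → v' ∈ l₁.take n := by
      rcases l.forall_mem_take_or_forall_mem_take_map_swap v v' with h | h
      · exact ⟨l, hl, rfl, h⟩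
      · exact ⟨_, hl.map (Iso.swapOfNeighborSetEq htwin).toEmbedding, List.length_map _, h⟩
    obtain ⟨m, hm, hmlen⟩ := exists_isDNS_induce_length_eq (s := {u : V | u ≠ v'})
      (hl₁.1.erase v') (fun x hx hxv' => hl₁.1.not_mem_erase (hxv' ▸ hx))
      (fun A x B h => hl₁.exists_witness_of_eq_erase hne htwin hprec h)
    calc mdnn G = l₁.length := by rw [hlen₁, hlen]
      _ ≤ (l₁.erase v').length + 1 := by have := l₁.le_length_erase (a := v'); omega
      _ = m.length + 1 := by rw [hmlen]
      _ ≤ mdnn (G.induce {u : V | u ≠ v'}) + 1 := by gcongr; exact hm.length_le_mdnn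
end
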